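/- Let X be a positive non-degenerate random variable with E[X] < ∞ and E|log(X)| < ∞. Then there exists a unique k ∈ (0, ∞) such that log(k) - ψ(k) = log(E[X]) - E[log(X)], where ψ is the digamma function. -/

import Mathlib

open MeasureTheory Real Filter Set Topology

noncomputable def gammaPdf (k l x : ℝ) : ℝ :=
  l ^ (-k) * x ^ (k - 1) * Real.exp (-x / l) / Real.Gamma k

noncomputable def digamma (x : ℝ) : ℝ := deriv Real.Gamma x / Real.Gamma x

lemma gamma_contDiffAt {x : ℝ} (hx : 0 < x) : ContDiffAt ℝ (⊤ : ℕ∞) Real.Gamma x := by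
  have hU : IsOpen {s : ℂ | 0 < s.re} := isOpen_lt continuous_const Complex.continuous_re
  have hd : DifferentiableOn ℂ Complex.Gamma {s : ℂ | 0 < s.re} := by
    intro s hs
    refine (Complex.differentiableAt_Gamma s fun m => ?_).differentiableWithinAt
    intro h
    rw [h] at hs
    simp only [Set.mem_setOf_eq, Complex.neg_re, Complex.natCast_re] at hs
    have : (0:ℝ) ≤ (m:ℝ) := Nat.cast_nonneg m
    linarith
  have ha : AnalyticAt ℂ Complex.Gamma (x : ℂ) :=
    hd.analyticOnNhd hU _ (by simpa using hx)
  have h1 : ContDiffAt ℝ (⊤ : ℕ∞) Complex.Gamma (x : ℂ) := ha.contDiffAt.restrict_scalars ℝ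
  have h2 : ContDiffAt ℝ (⊤ : ℕ∞) (fun y : ℝ => (Complex.Gamma (y : ℂ)).re) x :=
    Complex.reCLM.contDiff.contDiffAt.comp _
      (h1.comp x Complex.ofRealCLM.contDiff.contDiffAt)
  have heq : Real.Gamma = fun y : ℝ => (Complex.Gamma (y : ℂ)).re := by
    ext y; rw [Complex.Gamma_ofReal, Complex.ofReal_re]
  rw [heq]; exact h2

lemma gamma_contDiffOn : ContDiffOn ℝ (⊤ : ℕ∞) Real.Gamma (Ioi 0) :=
  fun x hx => (gamma_contDiffAt hx).contDiffWithinAt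

lemma deriv_gamma_contDiffOn : ContDiffOn ℝ (⊤ : ℕ∞) (deriv Real.Gamma) (Ioi 0) :=
  gamma_contDiffOn.deriv_of_isOpen isOpen_Ioi (mod_cast le_top)

lemma gamma_diffAt {x : ℝ} (hx : 0 < x) : DifferentiableAt ℝ Real.Gamma x :=
  Real.differentiableAt_Gamma fun m =>
    (((neg_nonpos.mpr (Nat.cast_nonneg m)).trans_lt hx).ne')

lemma digamma_diff {x : ℝ} (hx : 0 < x) : DifferentiableAt ℝ digamma x := by
  have h1 : DifferentiableAt ℝ (deriv Real.Gamma) x :=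
    ((deriv_gamma_contDiffOn.differentiableOn (by simp)).differentiableAt (Ioi_mem_nhds hx))
  exact h1.div (gamma_diffAt hx) (Real.Gamma_pos_of_pos hx).ne'

lemma hasDerivAt_logGamma {x : ℝ} (hx : 0 < x) :
    HasDerivAt (fun y => Real.log (Real.Gamma y)) (digamma x) x :=
  (gamma_diffAt hx).hasDerivAt.log (Real.Gamma_pos_of_pos hx).ne'

lemma deriv_gamma_add_one {x : ℝ} (hx : 0 < x) :
    deriv Real.Gamma (x + 1) = Real.Gamma x + x * deriv Real.Gamma x := by
  have h1 : HasDerivAt (fun y : ℝ => Real.Gamma (y + 1)) (deriv Real.Gamma (x + 1)) x := by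
    have := ((gamma_diffAt (by linarith : (0:ℝ) < x + 1)).hasDerivAt).comp x
      ((hasDerivAt_id x).add_const 1)
    simpa [Function.comp_def] using this
  have h2 : HasDerivAt (fun y : ℝ => y * Real.Gamma y)
      (1 * Real.Gamma x + x * deriv Real.Gamma x) x :=
    (hasDerivAt_id x).mul (gamma_diffAt hx).hasDerivAt
  have heq : (fun y : ℝ => y * Real.Gamma y) =ᶠ[nhds x] fun y => Real.Gamma (y + 1) := by
    filter_upwards [Ioi_mem_nhds hx] with y hy
    rw [Real.Gamma_add_one (ne_of_gt hy)]
  have h3 : HasDerivAt (fun y : ℝ => Real.Gamma (y + 1))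
      (1 * Real.Gamma x + x * deriv Real.Gamma x) x := h2.congr_of_eventuallyEq heq.symm
  have := h1.unique h3
  linarith [this]

lemma digamma_add_one {x : ℝ} (hx : 0 < x) : digamma (x + 1) = digamma x + 1 / x := by
  have hg : Real.Gamma x ≠ 0 := (Real.Gamma_pos_of_pos hx).ne'
  rw [digamma, digamma, deriv_gamma_add_one hx, Real.Gamma_add_one hx.ne']
  field_simp
  ring

lemma digamma_mono : MonotoneOn digamma (Ioi 0) := by
  have h := Real.convexOn_log_Gamma.monotoneOn_deriv
    (fun x hx => (hasDerivAt_logGamma hx).differentiableAt)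
  intro a ha b hb hab
  have ea : deriv (Real.log ∘ Real.Gamma) a = digamma a := (hasDerivAt_logGamma ha).deriv
  have eb : deriv (Real.log ∘ Real.Gamma) b = digamma b := (hasDerivAt_logGamma hb).deriv
  rw [← ea, ← eb]
  exact h ha hb hab

lemma deriv_digamma_nonneg {x : ℝ} (hx : 0 < x) : 0 ≤ deriv digamma x := by
  have hd := (digamma_diff hx).hasDerivAt
  rw [hasDerivAt_iff_tendsto_slope] at hd
  have hd' : Tendsto (slope digamma x) (nhdsWithin x (Ioi x)) (nhds (deriv digamma x)) :=
    hd.mono_left (nhdsWithin_mono x fun y hy => ne_of_gt hy)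
  refine ge_of_tendsto hd' ?_
  filter_upwards [self_mem_nhdsWithin,
    eventually_nhdsWithin_of_eventually_nhds (eventually_gt_nhds hx)] with y hy hy0
  rw [slope_def_field]
  apply div_nonneg
  · exact sub_nonneg.mpr (digamma_mono hx hy0 (le_of_lt hy))
  · exact sub_nonneg.mpr (le_of_lt hy)

lemma deriv_digamma_add_one {x : ℝ} (hx : 0 < x) :
    deriv digamma (x + 1) = deriv digamma x - 1 / x ^ 2 := by
  have h1 : HasDerivAt (fun y : ℝ => digamma (y + 1)) (deriv digamma (x + 1)) x := by
    have := ((digamma_diff (by linarith : (0:ℝ) < x + 1)).hasDerivAt).comp x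
      ((hasDerivAt_id x).add_const 1)
    simpa [Function.comp_def] using this
  have h2 : HasDerivAt (fun y : ℝ => digamma y + 1 / y)
      (deriv digamma x - 1 / x ^ 2) x := by
    have hinv : HasDerivAt (fun y : ℝ => 1 / y) (-(x ^ 2)⁻¹) x := by
      simpa [one_div] using hasDerivAt_inv hx.ne'
    have := (digamma_diff hx).hasDerivAt.add hinv
    simpa [one_div, sub_eq_add_neg, Pi.add_def] using this
  have heq : (fun y : ℝ => digamma y + 1 / y) =ᶠ[nhds x] fun y => digamma (y + 1) := by
    filter_upwards [Ioi_mem_nhds hx] with y hy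
    rw [digamma_add_one hy]
  exact h1.unique (h2.congr_of_eventuallyEq heq.symm)

lemma deriv_digamma_ge (N : ℕ) : ∀ x : ℝ, 0 < x → 1 / x - 1 / (x + N) ≤ deriv digamma x := by
  induction N with
  | zero =>
    intro x hx
    simpa using deriv_digamma_nonneg hx
  | succ N ih =>
    intro x hx
    have h1 : 0 < x + 1 := by linarith
    have h2 := ih (x + 1) h1
    have h3 := deriv_digamma_add_one hx
    have h4 : 1 / x - 1 / (x + 1) = 1 / (x * (x + 1)) := by field_simp; ring
    have h5 : 1 / (x * (x + 1)) ≤ 1 / x ^ 2 := by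
      apply one_div_le_one_div_of_le
      · positivity
      · nlinarith
    have hc : (x + 1 + (N : ℝ)) = x + ((N : ℝ) + 1) := by ring
    have hN : ((N + 1 : ℕ) : ℝ) = (N : ℝ) + 1 := by push_cast; ring
    rw [hN]
    rw [hc] at h2
    linarith

lemma one_div_lt_deriv_digamma {x : ℝ} (hx : 0 < x) : 1 / x < deriv digamma x := by
  have h1 : 0 < x + 1 := by linarith
  have hlim : Tendsto (fun N : ℕ => 1 / (x + 1) - 1 / (x + 1 + N)) atTop
      (nhds (1 / (x + 1) - 0)) := by
    refine Tendsto.const_sub _ ?_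
    have ht : Tendsto (fun N : ℕ => (x + 1) + (N : ℝ)) atTop atTop :=
      tendsto_atTop_add_const_left _ _ tendsto_natCast_atTop_atTop
    simpa [one_div, Function.comp_def] using tendsto_inv_atTop_zero.comp ht
  have hb : 1 / (x + 1) ≤ deriv digamma (x + 1) := by
    rw [show (1:ℝ) / (x+1) = 1 / (x+1) - 0 by ring]
    exact le_of_tendsto hlim (Filter.Eventually.of_forall fun N => deriv_digamma_ge N (x + 1) h1)
  have h3 := deriv_digamma_add_one hx
  have h4 : 1 / x - 1 / (x + 1) = 1 / (x * (x + 1)) := by field_simp; ring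
  have h5 : 1 / (x * (x + 1)) < 1 / x ^ 2 := by
    apply one_div_lt_one_div_of_lt
    · positivity
    · nlinarith
  linarith

lemma digamma_strictMono : StrictMonoOn digamma (Ioi 0) := by
  refine strictMonoOn_of_deriv_pos (convex_Ioi 0)
    (fun x hx => (digamma_diff hx).continuousAt.continuousWithinAt) (fun x hx => ?_)
  rw [interior_Ioi] at hx
  have h2 : 0 < 1 / x := one_div_pos.mpr hx
  linarith [one_div_lt_deriv_digamma hx]

lemma digamma_lt_log {x : ℝ} (hx : 0 < x) :
    digamma x < Real.log x ∧ Real.log x < digamma (x + 1) := by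
  obtain ⟨c, hc, hceq⟩ := exists_hasDerivAt_eq_slope (fun y => Real.log (Real.Gamma y))
    digamma (lt_add_one x)
    (fun y hy => (hasDerivAt_logGamma (lt_of_lt_of_le hx hy.1)).continuousAt.continuousWithinAt)
    (fun y hy => hasDerivAt_logGamma (hx.trans hy.1))
  have hc0 : 0 < c := hx.trans hc.1
  have hval : digamma c = Real.log x := by
    rw [hceq, Real.Gamma_add_one hx.ne',
      Real.log_mul hx.ne' (Real.Gamma_pos_of_pos hx).ne']
    ring
  constructor
  · rw [← hval]
    exact digamma_strictMono (mem_Ioi.mpr hx) (mem_Ioi.mpr hc0) hc.1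
  · rw [← hval]
    exact digamma_strictMono (mem_Ioi.mpr hc0) (mem_Ioi.mpr (by linarith : (0:ℝ) < x + 1)) hc.2

lemma F_strictAnti : StrictAntiOn (fun x : ℝ => Real.log x - digamma x) (Ioi 0) := by
  refine strictAntiOn_of_deriv_neg (convex_Ioi 0) ?_ (fun x hx => ?_)
  · intro x hx
    exact ((Real.continuousAt_log (ne_of_gt hx)).sub
      (digamma_diff hx).continuousAt).continuousWithinAt
  · rw [interior_Ioi] at hx
    have hd : HasDerivAt (fun x : ℝ => Real.log x - digamma x)
        (x⁻¹ - deriv digamma x) x :=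
      (Real.hasDerivAt_log hx.ne').sub (digamma_diff hx).hasDerivAt
    rw [hd.deriv]
    have := one_div_lt_deriv_digamma hx
    rw [one_div] at this
    linarith

lemma log_ge_aux {y : ℝ} (hy : 0 < y) : 1 - 1 / y ≤ Real.log y := by
  have h := Real.log_le_sub_one_of_pos (show (0:ℝ) < 1 / y by positivity)
  rw [Real.log_div one_ne_zero hy.ne', Real.log_one] at h
  linarith

theorem exists_unique_k_likelihood {Ω : Type*} [MeasurableSpace Ω] (P : Measure Ω)
    [IsProbabilityMeasure P] (X : Ω → ℝ) (hX : Measurable X)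
    (hpos : ∀ᵐ ω ∂P, 0 < X ω)
    (hnondeg : ¬ ∃ c : ℝ, ∀ᵐ ω ∂P, X ω = c)
    (hint : Integrable X P) (hlog : Integrable (fun ω => Real.log (X ω)) P) :
    ∃! k : ℝ, 0 < k ∧
      Real.log k - digamma k = Real.log (∫ ω, X ω ∂P) - ∫ ω, Real.log (X ω) ∂P := by
  set m := ∫ ω, X ω ∂P with hm
  set μ := ∫ ω, Real.log (X ω) ∂P with hμ
  -- Step 1: strict Jensen, 0 < log m - μ
  have hXae : (fun ω => Real.exp (Real.log (X ω))) =ᵐ[P] X := by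
    filter_upwards [hpos] with ω h using Real.exp_log h
  have hgi : Integrable (Real.exp ∘ fun ω => Real.log (X ω)) P := hint.congr hXae.symm
  have hJ := strictConvexOn_exp.ae_eq_const_or_map_average_lt continuous_exp.continuousOn
    isClosed_univ (Filter.Eventually.of_forall fun ω => Set.mem_univ _) hlog hgi
  rw [average_eq_integral, average_eq_integral] at hJ
  have hC : 0 < Real.log m - μ := by
    rcases hJ with h | h
    · exfalso
      apply hnondeg
      refine ⟨Real.exp μ, ?_⟩
      filter_upwards [h, hpos] with ω h1 h2
      rw [← Real.exp_log h2, h1]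
      rfl
    · have hm' : Real.exp μ < m := by
        have : (∫ ω, Real.exp (Real.log (X ω)) ∂P) = m := integral_congr_ae hXae
        simpa [this] using h
      have hm0 : 0 < m := (Real.exp_pos μ).trans hm'
      have := (Real.lt_log_iff_exp_lt hm0).mpr hm'
      linarith
  set C := Real.log m - μ with hCdef
  set F := fun x : ℝ => Real.log x - digamma x with hF
  have hFpos : ∀ x : ℝ, 0 < x → 0 < F x := fun x hx =>
    sub_pos.mpr (digamma_lt_log hx).1
  have hFlt : ∀ x : ℝ, 0 < x → F x < 1 / x := by
    intro x hx
    have h1 := (digamma_lt_log hx).2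
    rw [digamma_add_one hx] at h1
    simp only [hF]
    linarith
  -- choose b with F b < C
  set b := max 2 (1 / C + 1) with hb
  have hb0 : (0:ℝ) < b := lt_of_lt_of_le two_pos (le_max_left _ _)
  have hbC : 1 / b < C := by
    have h1 : 1 / C + 1 ≤ b := le_max_right _ _
    have h2 : 0 < 1 / C + 1 := by positivity
    have h3 : 1 / b ≤ 1 / (1 / C + 1) := one_div_le_one_div_of_le h2 h1
    have h4 : 1 / (1 / C + 1) < C := by
      rw [div_lt_iff₀ h2]
      have : 0 < C * (1 / C) := by
        rw [mul_one_div, div_self hC.ne']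
        norm_num
      nlinarith [mul_one_div C C, div_self hC.ne']
    linarith
  have hFb : F b < C := lt_trans (hFlt b hb0) hbC
  -- choose a with F a > C
  set ψ2 := digamma 2 with hψ2
  set u := 1 + Real.sqrt (max (C + ψ2) 0) with hu
  have hu1 : 1 ≤ u := le_add_of_nonneg_right (Real.sqrt_nonneg _)
  have hu0 : 0 < u := lt_of_lt_of_le one_pos hu1
  set a := (u⁻¹) ^ 2 with ha
  have ha0 : 0 < a := by positivity
  have ha1 : a ≤ 1 := by
    rw [ha]
    have : u⁻¹ ≤ 1 := by
      rw [inv_le_one_iff₀]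
      right; exact hu1
    nlinarith [inv_nonneg.mpr hu0.le]
  have hFa : C < F a := by
    have hrec : digamma (a + 1) = digamma a + 1 / a := digamma_add_one ha0
    have hψa : digamma (a + 1) ≤ ψ2 := by
      apply digamma_mono (mem_Ioi.mpr (by linarith)) (mem_Ioi.mpr two_pos)
      linarith
    have hloga : Real.log a = -2 * Real.log u := by
      rw [ha, Real.log_pow, Real.log_inv]
      push_cast; ring
    have hlogu : Real.log u ≤ u - 1 := Real.log_le_sub_one_of_pos hu0
    have hinva : 1 / a = u ^ 2 := by
      rw [ha]
      field_simp
    have hsq : (u - 1) ^ 2 = max (C + ψ2) 0 := by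
      rw [hu]
      have := Real.sq_sqrt (le_max_right (C + ψ2) 0)
      simpa using this
    have hFa' : F a = Real.log a + 1 / a - digamma (a + 1) := by
      simp only [hF]
      rw [hrec]; ring
    have hmax : C + ψ2 ≤ max (C + ψ2) 0 := le_max_left _ _
    rw [hFa', hloga, hinva]
    nlinarith [hsq, hmax, hlogu, hψa]
  -- IVT
  have hab : a < b := lt_of_le_of_lt ha1 (lt_of_lt_of_le one_lt_two (le_max_left _ _))
  have hFcont : ContinuousOn F (Icc a b) := by
    intro x hx
    have hx0 : 0 < x := lt_of_lt_of_le ha0 hx.1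
    exact ((Real.continuousAt_log hx0.ne').sub
      (digamma_diff hx0).continuousAt).continuousWithinAt
  have hmem : C ∈ Icc (F b) (F a) := ⟨hFb.le, hFa.le⟩
  obtain ⟨k, hk, hFk⟩ := intermediate_value_Icc' hab.le hFcont hmem
  have hk0 : 0 < k := lt_of_lt_of_le ha0 hk.1
  refine ⟨k, ⟨hk0, by simpa [hF, hCdef] using hFk⟩, ?_⟩
  rintro y ⟨hy0, hy⟩
  have hyF : F y = F k := by
    simp only [hF]
    rw [hy]
    simpa [hF, hCdef] using hFk.symm
  exact F_strictAnti.injOn (mem_Ioi.mpr hy0) (mem_Ioi.mpr hk0) hyF
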